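/- arXiv:1508.05296 — 5 statements merged into one kernel-verified Lean document; each statement's English description precedes it below -/
import Mathlib

section
/- The quantities c_t(n) satisfy the recurrence c_t(n) = Σ_{k=1}^{⌊(n - t(t-1)/2)/t⌋} (t-1)·(t+1)^(k-1)·c_{t-1}(n - k·t) for all integers t ≥ 2 and n ≥ 1. -/
open scoped Classical

/-- `primeWeight t n` : sum over partitions of `n` into `t` distinct positive parts
`p 0 > p 1 > ⋯ > p (t-1) ≥ 1` of `(1/(t(t+1))) ∏_{i=1}^{t} ((i+1)/i)^{p_i}`. -/
noncomputable def primeWeight (t n : ℕ) : ℝ :=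
  ∑ p ∈ (Fintype.piFinset (fun _ : Fin t => Finset.range (n + 1))).filter
      (fun p => (∀ i j : Fin t, i < j → p j < p i) ∧ (∀ i, 1 ≤ p i) ∧
        ∑ i, p i = n),
    (1 / ((t : ℝ) * ((t : ℝ) + 1))) *
      ∏ i : Fin t, ((((i : ℕ) : ℝ) + 2) / (((i : ℕ) : ℝ) + 1)) ^ p i

/-- telescoping product -/
lemma pw_telescope (m : ℕ) :
    ∏ i : Fin m, ((((i : ℕ) : ℝ) + 2) / (((i : ℕ) : ℝ) + 1)) = (m : ℝ) + 1 := by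
  induction m with
  | zero => simp
  | succ m ih =>
    rw [Fin.prod_univ_castSucc]
    simp only [Fin.coe_castSucc, Fin.val_last] at *
    rw [ih]
    have h1 : ((m : ℝ) + 1) ≠ 0 := by positivity
    push_cast
    field_simp
    ring

/-- strictly decreasing nat sequences drop by at least one each step -/
lemma pw_gap {m : ℕ} (f : Fin m → ℕ) (h : ∀ i j : Fin m, i < j → f j < f i) :
    ∀ d : ℕ, ∀ i j : Fin m, (i : ℕ) + d = (j : ℕ) → f j + d ≤ f i := by
  intro d
  induction d with
  | zero =>
    intro i j hij
    have : i = j := Fin.ext (by omega)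
    simp [this]
  | succ d ih =>
    intro i j hij
    have hj : (j : ℕ) < m := j.isLt
    have hlt : (i : ℕ) + d < m := by omega
    set j' : Fin m := ⟨(i : ℕ) + d, hlt⟩ with hj'
    have hval : (j' : ℕ) = (i : ℕ) + d := rfl
    have h1 : f j' + d ≤ f i := ih i j' rfl
    have h2 : f j < f j' := h j' j (by rw [Fin.lt_def]; omega)
    omega

theorem stmt_1 (t n : ℕ) (ht : 2 ≤ t) (hn : 1 ≤ n) :
    primeWeight t n =
      ∑ k ∈ Finset.Icc 1 ((n - t * (t - 1) / 2) / t),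
        ((t : ℝ) - 1) * ((t : ℝ) + 1) ^ (k - 1) * primeWeight (t - 1) (n - k * t) := by
  obtain ⟨s, rfl⟩ : ∃ s, t = s + 2 := ⟨t - 2, by omega⟩
  clear ht
  simp only [show s + 2 - 1 = s + 1 from rfl]
  set D : ℕ := (s + 2) * (s + 1) / 2 with hDdef
  have hD2 : 2 * D = (s + 2) * (s + 1) := by
    apply Nat.mul_div_cancel'
    have : Even ((s + 1) * ((s + 1) + 1)) := Nat.even_mul_succ_self (s + 1)
    rw [show (s + 2) * (s + 1) = (s + 1) * ((s + 1) + 1) by ring]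
    exact this.two_dvd
  set K : ℕ := (n - D) / (s + 2) with hK
  -- the Gauss sum over Fin (s+2)
  have hGauss : ∑ i : Fin (s + 2), (s + 1 - (i : ℕ)) = D := by
    rw [Fin.sum_univ_eq_sum_range (fun i => s + 1 - i) (s + 2)]
    rw [show (fun i => s + 1 - i) = (fun i => (fun j => j) (s + 2 - 1 - i)) from rfl]
    rw [Finset.sum_range_reflect (fun i => i) (s + 2)]
    rw [Finset.sum_range_id]
    exact hDdef.symm
  -- rewrite RHS as a sum over a sigma type
  rw [show (∑ k ∈ Finset.Icc 1 K,
        (((s + 2 : ℕ) : ℝ) - 1) * (((s + 2 : ℕ) : ℝ) + 1) ^ (k - 1) *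
          primeWeight (s + 1) (n - k * (s + 2)))
      = ∑ k ∈ Finset.Icc 1 K,
          ∑ q ∈ (Fintype.piFinset
              (fun _ : Fin (s + 1) => Finset.range (n - k * (s + 2) + 1))).filter
              (fun q => (∀ i j : Fin (s + 1), i < j → q j < q i) ∧ (∀ i, 1 ≤ q i) ∧
                ∑ i, q i = n - k * (s + 2)),
            (((s + 2 : ℕ) : ℝ) - 1) * (((s + 2 : ℕ) : ℝ) + 1) ^ (k - 1) *
              ((1 / (((s + 1 : ℕ) : ℝ) * (((s + 1 : ℕ) : ℝ) + 1))) *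
                ∏ i : Fin (s + 1), ((((i : ℕ) : ℝ) + 2) / (((i : ℕ) : ℝ) + 1)) ^ q i)
      from Finset.sum_congr rfl fun k _ => by rw [primeWeight, Finset.mul_sum]]
  rw [Finset.sum_sigma']
  rw [primeWeight]
  refine Finset.sum_bij'
    (fun p _ => (⟨p (Fin.last (s + 1)),
        fun i : Fin (s + 1) => p i.castSucc - p (Fin.last (s + 1))⟩ :
        Σ _ : ℕ, (Fin (s + 1) → ℕ)))
    (fun x _ => Fin.snoc (fun i : Fin (s + 1) => x.2 i + x.1) x.1)
    ?_ ?_ ?_ ?_ ?_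
  · -- forward membership
    intro p hp
    rw [Finset.mem_filter, Fintype.mem_piFinset] at hp
    obtain ⟨hrange, hdec, hpos, hsum⟩ := hp
    set k := p (Fin.last (s + 1)) with hk
    have hgap : ∀ i : Fin (s + 2), k + (s + 1 - (i : ℕ)) ≤ p i := by
      intro i
      have := pw_gap p hdec (s + 1 - (i : ℕ)) i (Fin.last (s + 1))
        (by simp [Fin.val_last]; omega)
      omega
    have hcomm : (s + 2) * k = k * (s + 2) := by ring
    have hsum_ge : (s + 2) * k + D ≤ n := by
      calc (s + 2) * k + D = ∑ i : Fin (s + 2), (k + (s + 1 - (i : ℕ))) := by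
            rw [Finset.sum_add_distrib, Finset.sum_const, Finset.card_univ,
              Fintype.card_fin, hGauss, smul_eq_mul]
        _ ≤ ∑ i, p i := Finset.sum_le_sum fun i _ => hgap i
        _ = n := hsum
    have hkK : k ≤ K := by
      rw [hK, Nat.le_div_iff_mul_le (by omega : 0 < s + 2), Nat.mul_comm]
      omega
    have hle : ∀ i : Fin (s + 1), k ≤ p i.castSucc := by
      intro i
      have := hgap i.castSucc
      omega
    have hqsum : ∑ i : Fin (s + 1), (p i.castSucc - k) = n - k * (s + 2) := by
      have h1 : ∑ i : Fin (s + 1), (p i.castSucc - k)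
          = (∑ i : Fin (s + 1), p i.castSucc) - ∑ _i : Fin (s + 1), k :=
        (Finset.sum_tsub_distrib _ fun i _ => hle i)
      have h2 : (∑ i : Fin (s + 1), p i.castSucc) + k = n := by
        rw [← Fin.sum_univ_castSucc]; exact hsum
      have h3 : (∑ _i : Fin (s + 1), k) = (s + 1) * k := by
        rw [Finset.sum_const, Finset.card_univ, Fintype.card_fin, smul_eq_mul]
      have h4 : (s + 1) * k + k = k * (s + 2) := by ring
      omega
    rw [Finset.mem_sigma]
    refine ⟨Finset.mem_Icc.mpr ⟨hpos _, hkK⟩, ?_⟩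
    rw [Finset.mem_filter, Fintype.mem_piFinset]
    dsimp only
    refine ⟨fun i => ?_, fun i j hij => ?_, fun i => ?_, hqsum⟩
    · rw [Finset.mem_range]
      have : p i.castSucc - k ≤ ∑ j : Fin (s + 1), (p j.castSucc - k) :=
        Finset.single_le_sum (f := fun j : Fin (s + 1) => p j.castSucc - k)
          (fun j _ => Nat.zero_le _) (Finset.mem_univ i)
      omega
    · have := hdec i.castSucc j.castSucc (by simpa [Fin.castSucc_lt_castSucc_iff] using hij)
      have := hle j
      omega
    · have : p (Fin.last (s + 1)) < p i.castSucc :=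
        hdec i.castSucc (Fin.last (s + 1)) (Fin.castSucc_lt_last i)
      omega
  · -- backward membership
    rintro ⟨k, q⟩ hx
    dsimp only
    rw [Finset.mem_sigma, Finset.mem_Icc, Finset.mem_filter, Fintype.mem_piFinset] at hx
    obtain ⟨⟨hk1, hkK⟩, hrange, hdec, hpos, hsum⟩ := hx
    replace hk1 : 1 ≤ k := hk1
    replace hkK : k ≤ K := hkK
    replace hrange : ∀ i : Fin (s + 1), q i ∈ Finset.range (n - k * (s + 2) + 1) := hrange
    replace hdec : ∀ i j : Fin (s + 1), i < j → q j < q i := hdec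
    replace hpos : ∀ i : Fin (s + 1), 1 ≤ q i := hpos
    replace hsum : ∑ i : Fin (s + 1), q i = n - k * (s + 2) := hsum
    have hA : k * (s + 2) ≤ n - D := (Nat.le_div_iff_mul_le (by omega : 0 < s + 2)).mp hkK
    have hkn : k * (s + 2) ≤ n := by omega
    have hkk : k ≤ k * (s + 2) := Nat.le_mul_of_pos_right k (by omega)
    rw [Finset.mem_filter, Fintype.mem_piFinset]
    refine ⟨fun i => ?_, fun i j hij => ?_, fun i => ?_, ?_⟩
    · rw [Finset.mem_range]
      rcases eq_or_ne i (Fin.last (s + 1)) with rfl | hne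
      · rw [Fin.snoc_last]; omega
      · obtain ⟨i, rfl⟩ := Fin.exists_castSucc_eq.mpr hne
        rw [Fin.snoc_castSucc]
        have := Finset.mem_range.mp (hrange i)
        omega
    · rcases eq_or_ne j (Fin.last (s + 1)) with rfl | hnej
      · rcases eq_or_ne i (Fin.last (s + 1)) with rfl | hnei
        · exact absurd hij (lt_irrefl _)
        · obtain ⟨i, rfl⟩ := Fin.exists_castSucc_eq.mpr hnei
          rw [Fin.snoc_last, Fin.snoc_castSucc]
          have := hpos i
          omega
      · obtain ⟨j, rfl⟩ := Fin.exists_castSucc_eq.mpr hnej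
        rcases eq_or_ne i (Fin.last (s + 1)) with rfl | hnei
        · exact absurd (hij.trans (Fin.castSucc_lt_last j)) (lt_irrefl _)
        · obtain ⟨i, rfl⟩ := Fin.exists_castSucc_eq.mpr hnei
          rw [Fin.snoc_castSucc, Fin.snoc_castSucc]
          have := hdec i j (by simpa [Fin.castSucc_lt_castSucc_iff] using hij)
          omega
    · rcases eq_or_ne i (Fin.last (s + 1)) with rfl | hne
      · rw [Fin.snoc_last]; omega
      · obtain ⟨i, rfl⟩ := Fin.exists_castSucc_eq.mpr hne
        rw [Fin.snoc_castSucc]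
        have := hpos i
        omega
    · rw [Fin.sum_univ_castSucc]
      simp only [Fin.snoc_castSucc, Fin.snoc_last]
      rw [Finset.sum_add_distrib, Finset.sum_const, Finset.card_univ, Fintype.card_fin,
        smul_eq_mul, hsum]
      have : (s + 1) * k + k = k * (s + 2) := by ring
      omega
  · -- left inverse
    intro p hp
    rw [Finset.mem_filter, Fintype.mem_piFinset] at hp
    obtain ⟨hrange, hdec, hpos, hsum⟩ := hp
    funext x
    dsimp only
    rcases eq_or_ne x (Fin.last (s + 1)) with rfl | hne
    · rw [Fin.snoc_last]
    · obtain ⟨x, rfl⟩ := Fin.exists_castSucc_eq.mpr hne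
      rw [Fin.snoc_castSucc]
      have : p (Fin.last (s + 1)) < p x.castSucc :=
        hdec x.castSucc (Fin.last (s + 1)) (Fin.castSucc_lt_last x)
      omega
  · -- right inverse
    rintro ⟨k, q⟩ _
    dsimp only
    simp only [Fin.snoc_last, Fin.snoc_castSucc]
    congr 1
    funext i
    omega
  · -- value equality
    intro p hp
    rw [Finset.mem_filter, Fintype.mem_piFinset] at hp
    obtain ⟨hrange, hdec, hpos, hsum⟩ := hp
    set k := p (Fin.last (s + 1)) with hk
    obtain ⟨m, hm⟩ : ∃ m, k = m + 1 := ⟨k - 1, by have := hpos (Fin.last (s + 1)); omega⟩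
    have hle : ∀ i : Fin (s + 1), k ≤ p i.castSucc := fun i =>
      le_of_lt (hdec i.castSucc (Fin.last (s + 1)) (Fin.castSucc_lt_last i))
    have hprod : ∏ i : Fin (s + 2), ((((i : ℕ) : ℝ) + 2) / (((i : ℕ) : ℝ) + 1)) ^ p i
        = (∏ i : Fin (s + 1),
            ((((i : ℕ) : ℝ) + 2) / (((i : ℕ) : ℝ) + 1)) ^ (p i.castSucc - k))
          * ((s : ℝ) + 2) ^ k * (((s : ℝ) + 3) / ((s : ℝ) + 2)) ^ k := by
      rw [Fin.prod_univ_castSucc]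
      simp only [Fin.coe_castSucc, Fin.val_last]
      have hexp : ∀ i : Fin (s + 1),
          ((((i : ℕ) : ℝ) + 2) / (((i : ℕ) : ℝ) + 1)) ^ p i.castSucc
          = ((((i : ℕ) : ℝ) + 2) / (((i : ℕ) : ℝ) + 1)) ^ (p i.castSucc - k)
            * ((((i : ℕ) : ℝ) + 2) / (((i : ℕ) : ℝ) + 1)) ^ k := by
        intro i
        rw [← pow_add, Nat.sub_add_cancel (hle i)]
      rw [Finset.prod_congr rfl fun i _ => hexp i, Finset.prod_mul_distrib,
        Finset.prod_pow, pw_telescope]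
      push_cast
      ring
    have hlast : p (Fin.last (s + 1)) = m + 1 := by rw [← hk]; exact hm
    dsimp only
    rw [hprod, hm]
    have h2 : ((s : ℝ) + 2) ≠ 0 := by positivity
    have h3 : ((s : ℝ) + 3) ≠ 0 := by positivity
    have h1 : ((s : ℝ) + 1) ≠ 0 := by positivity
    simp only [Nat.add_sub_cancel]
    push_cast
    simp only [div_pow]
    field_simp
    ring
end

section
/- Define q_1 = 1/2 and q_t = ((t-1)/(2^t - t - 1)) · q_{t-1} for t ≥ 2. Then for all positive integers t and n, c_t(n) ≤ q_t · 2^n. -/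
/-!
Removing the smallest part `m` of a partition of `n` into `t + 1` distinct parts and
lowering the other parts by `m` gives a partition of `n - (t + 1) m` into `t` distinct parts.
Since `∏_{i ≤ t} (i + 2) / (i + 1)` telescopes to `t + 2`, this divides the weight by exactly
`(t + 2) ^ m`, so the unnormalised sums satisfy
`S_{t+1}(n) ≤ ∑_{m ≥ 1} (t + 2)^m S_t(n - (t + 1) m)`.
Starting from `S_1(n) ≤ 2^n`, induction gives `S_t(n) ≤ t (t + 1) q_t 2^n`: the geometric series
of ratio `(t + 2) / 2^(t + 1)` contributes the factor `(t + 2) / (2^(t + 1) - t - 2)`, which is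
exactly the growth of `t (t + 1) q_t`.
-/

open scoped Classical

/-- `qseq 1 = 1/2` and `qseq t = ((t-1)/(2^t - t - 1)) * qseq (t-1)` for `t ≥ 2`. -/
noncomputable def qseq : ℕ → ℝ
  | 0 => 0
  | 1 => 1 / 2
  | t + 2 => (((t : ℝ) + 1) / (2 ^ (t + 2) - ((t : ℝ) + 2) - 1)) * qseq (t + 1)

open Finset

theorem Finset.sum_le_sum_of_injOn_of_nonneg {ι κ M : Type*} [AddCommMonoid M] [PartialOrder M]
    [IsOrderedAddMonoid M] {s : Finset ι} {t : Finset κ} (e : ι → κ) (he : Set.InjOn e s)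
    (hst : Set.MapsTo e s t) {f : κ → M} (hf : ∀ y ∈ t, 0 ≤ f y) :
    ∑ x ∈ s, f (e x) ≤ ∑ y ∈ t, f y := by
  classical
  rw [← sum_image he]
  exact sum_le_sum_of_subset_of_nonneg (image_subset_iff.2 hst) fun y hy _ => hf y hy

lemma pow_mul_pow_sub_eq {K : Type*} [Field K] {a b : K} (hb : b ≠ 0) {k m n : ℕ}
    (h : k * m ≤ n) : a ^ m * b ^ (n - k * m) = b ^ n * (a / b ^ k) ^ m := by
  rw [← Nat.sub_add_cancel h, pow_add, Nat.add_sub_cancel, pow_mul, div_pow]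
  field_simp

lemma prod_add_two_div_add_one (t : ℕ) :
    ∏ i : Fin t, ((((i : ℕ) : ℝ) + 2) / (((i : ℕ) : ℝ) + 1)) = t + 1 := by
  induction t with
  | zero => simp
  | succ t ih =>
    rw [Fin.prod_univ_castSucc]
    simp only [Fin.val_castSucc, Fin.val_last, ih]
    push_cast
    field_simp
    ring

lemma add_two_lt_two_pow_succ {t : ℕ} (ht : 1 ≤ t) : (t : ℝ) + 2 < 2 ^ (t + 1) := by
  have h : t + 1 ≤ 2 ^ t := Nat.lt_two_pow_self
  have h' : ((t : ℝ) + 1) ≤ 2 ^ t := by exact_mod_cast h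
  have h1 : (1 : ℝ) ≤ t := by exact_mod_cast ht
  rw [pow_succ]
  linarith

lemma qseq_nonneg (t : ℕ) : 0 ≤ qseq t := by
  induction t using qseq.induct with
  | case1 => simp [qseq]
  | case2 => norm_num [qseq]
  | case3 t ih =>
    have h := add_two_lt_two_pow_succ (Nat.le_add_left 1 t)
    push_cast at h
    rw [qseq]
    exact mul_nonneg (div_nonneg (by positivity) (by linarith)) ih

lemma mul_qseq_succ {t : ℕ} (ht : 1 ≤ t) :
    ((t : ℝ) + 1) * (t + 2) * qseq (t + 1) =
      t * (t + 1) * qseq t * ((t + 2) / (2 ^ (t + 1) - (t + 2))) := by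
  obtain ⟨s, rfl⟩ := Nat.exists_eq_add_of_le' ht
  have h := add_two_lt_two_pow_succ ht
  rw [qseq]
  push_cast at h ⊢
  field_simp
  ring

noncomputable def distinctParts (t n : ℕ) : Finset (Fin t → ℕ) :=
  (Fintype.piFinset fun _ : Fin t => range (n + 1)).filter
    fun p => (∀ i j : Fin t, i < j → p j < p i) ∧ (∀ i, 1 ≤ p i) ∧ ∑ i, p i = n

lemma mem_distinctParts {t n : ℕ} {p : Fin t → ℕ} :
    p ∈ distinctParts t n ↔ StrictAnti p ∧ (∀ i, 1 ≤ p i) ∧ ∑ i, p i = n := by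
  refine ⟨fun h => (mem_filter.1 h).2, fun ⟨hanti, hpos, hsum⟩ =>
    mem_filter.2 ⟨?_, hanti, hpos, hsum⟩⟩
  refine Fintype.mem_piFinset.2 fun i => mem_range.2 (Nat.lt_succ_of_le ?_)
  exact hsum ▸ single_le_sum (fun j _ => Nat.zero_le (p j)) (mem_univ i)

def lowerParts {t : ℕ} (p : Fin (t + 1) → ℕ) : Fin t → ℕ :=
  fun i => p i.castSucc - p (Fin.last t)

section lowerParts

variable {t n : ℕ} {p : Fin (t + 1) → ℕ}

lemma last_le_of_mem_distinctParts (hp : p ∈ distinctParts (t + 1) n) (i : Fin (t + 1)) :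
    p (Fin.last t) ≤ p i :=
  (mem_distinctParts.1 hp).1.antitone (Fin.le_last i)

lemma sum_lowerParts_add (hp : p ∈ distinctParts (t + 1) n) :
    ∑ i, lowerParts p i + (t + 1) * p (Fin.last t) = n := by
  obtain ⟨-, -, hsum⟩ := mem_distinctParts.1 hp
  calc ∑ i, lowerParts p i + (t + 1) * p (Fin.last t)
      = ∑ i : Fin t, (lowerParts p i + p (Fin.last t)) + p (Fin.last t) := by
        rw [sum_add_distrib, sum_const, card_univ, Fintype.card_fin, smul_eq_mul]; ring
    _ = n := by
        rw [← hsum, Fin.sum_univ_castSucc]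
        congr 1
        exact sum_congr rfl fun i _ =>
          Nat.sub_add_cancel (last_le_of_mem_distinctParts hp i.castSucc)

lemma last_mem_Icc_of_mem_distinctParts (hp : p ∈ distinctParts (t + 1) n) :
    p (Fin.last t) ∈ Icc 1 (n / (t + 1)) := by
  have hsum := sum_lowerParts_add hp
  refine mem_Icc.2 ⟨(mem_distinctParts.1 hp).2.1 _, ?_⟩
  rw [Nat.le_div_iff_mul_le (by omega : 0 < t + 1), mul_comm]
  exact hsum ▸ Nat.le_add_left _ _

lemma lowerParts_mem_distinctParts (hp : p ∈ distinctParts (t + 1) n) :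
    lowerParts p ∈ distinctParts t (n - (t + 1) * p (Fin.last t)) := by
  obtain ⟨hanti, -, -⟩ := mem_distinctParts.1 hp
  have hle := last_le_of_mem_distinctParts hp
  refine mem_distinctParts.2 ⟨fun i j hij => ?_, fun i => ?_, ?_⟩
  · exact Nat.sub_lt_sub_right (hle j.castSucc) (hanti (Fin.castSucc_lt_castSucc_iff.2 hij))
  · exact Nat.le_sub_of_add_le' (hanti (Fin.castSucc_lt_last i))
  · have := sum_lowerParts_add hp
    omega

lemma lowerParts_injOn :
    Set.InjOn (fun p => (⟨p (Fin.last t), lowerParts p⟩ : (_ : ℕ) × (Fin t → ℕ)))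
      (distinctParts (t + 1) n) := by
  intro p hp p' hp' h
  simp only [Sigma.mk.inj_iff, heq_iff_eq] at h
  obtain ⟨hlast, hlower⟩ := h
  funext i
  induction i using Fin.lastCases with
  | last => exact hlast
  | cast i =>
    have hi : p i.castSucc - p (Fin.last t) = p' i.castSucc - p' (Fin.last t) :=
      congrFun hlower i
    have := last_le_of_mem_distinctParts hp i.castSucc
    have := last_le_of_mem_distinctParts hp' i.castSucc
    omega

end lowerParts

noncomputable def partWeight {t : ℕ} (p : Fin t → ℕ) : ℝ :=
  ∏ i : Fin t, ((((i : ℕ) : ℝ) + 2) / (((i : ℕ) : ℝ) + 1)) ^ p i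

lemma partWeight_nonneg {t : ℕ} (p : Fin t → ℕ) : 0 ≤ partWeight p := by
  unfold partWeight
  positivity

lemma partWeight_eq_mul_partWeight_lowerParts {t : ℕ} (p : Fin (t + 1) → ℕ)
    (hlast : ∀ i, p (Fin.last t) ≤ p i) :
    partWeight p = (t + 2) ^ p (Fin.last t) * partWeight (lowerParts p) := by
  set r : Fin (t + 1) → ℝ := fun i => (((i : ℕ) : ℝ) + 2) / (((i : ℕ) : ℝ) + 1)
  calc partWeight p = ∏ i, r i ^ (p i - p (Fin.last t)) * r i ^ p (Fin.last t) :=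
        prod_congr rfl fun i _ => by rw [← pow_add, Nat.sub_add_cancel (hlast i)]
    _ = (∏ i, r i ^ (p i - p (Fin.last t))) * (∏ i, r i) ^ p (Fin.last t) := by
        rw [prod_mul_distrib, prod_pow]
    _ = _ := by
        rw [Fin.prod_univ_castSucc (fun i => r i ^ (p i - p (Fin.last t))),
          prod_add_two_div_add_one, Nat.sub_self, pow_zero, mul_one]
        simp only [r, partWeight, lowerParts, Fin.val_castSucc]
        push_cast
        ring

noncomputable def weightSum (t n : ℕ) : ℝ := ∑ p ∈ distinctParts t n, partWeight p

lemma primeWeight_eq_mul_weightSum (t n : ℕ) :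
    primeWeight t n = 1 / ((t : ℝ) * (t + 1)) * weightSum t n := by
  rw [primeWeight, weightSum, mul_sum]
  rfl

lemma weightSum_one_le (n : ℕ) : weightSum 1 n ≤ 2 ^ n := by
  have hsub : distinctParts 1 n ⊆ {fun _ => n} := by
    intro p hp
    obtain ⟨-, -, hsum⟩ := mem_distinctParts.1 hp
    rw [Fin.sum_univ_one] at hsum
    exact mem_singleton.2 (funext fun i => (Fin.fin_one_eq_zero i).symm ▸ hsum)
  calc weightSum 1 n ≤ ∑ p ∈ {fun _ => n}, partWeight p :=
        sum_le_sum_of_subset_of_nonneg hsub fun p _ _ => partWeight_nonneg p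
    _ = 2 ^ n := by norm_num [partWeight]

lemma weightSum_succ_le (t n : ℕ) :
    weightSum (t + 1) n ≤
      ∑ m ∈ Icc 1 (n / (t + 1)), ((t : ℝ) + 2) ^ m * weightSum t (n - (t + 1) * m) := by
  set lower : (Fin (t + 1) → ℕ) → (_ : ℕ) × (Fin t → ℕ) :=
    fun p => ⟨p (Fin.last t), lowerParts p⟩
  calc weightSum (t + 1) n
      = ∑ p ∈ distinctParts (t + 1) n, ((t : ℝ) + 2) ^ (lower p).1 * partWeight (lower p).2 :=
        sum_congr rfl fun p hp => partWeight_eq_mul_partWeight_lowerParts p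
          (last_le_of_mem_distinctParts hp)
    _ ≤ ∑ x ∈ (Icc 1 (n / (t + 1))).sigma fun m => distinctParts t (n - (t + 1) * m),
          ((t : ℝ) + 2) ^ x.1 * partWeight x.2 :=
        sum_le_sum_of_injOn_of_nonneg (f := fun x => ((t : ℝ) + 2) ^ x.1 * partWeight x.2)
          lower lowerParts_injOn
          (fun p hp => mem_sigma.2 ⟨last_mem_Icc_of_mem_distinctParts hp,
            lowerParts_mem_distinctParts hp⟩)
          fun x _ => mul_nonneg (by positivity) (partWeight_nonneg x.2)
    _ = _ := by simp only [sum_sigma, weightSum, mul_sum]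

lemma weightSum_le {t : ℕ} (ht : 1 ≤ t) (n : ℕ) :
    weightSum t n ≤ t * (t + 1) * qseq t * 2 ^ n := by
  induction t, ht using Nat.le_induction generalizing n with
  | base => norm_num [qseq]; exact weightSum_one_le n
  | succ t ht ih =>
    set C := (t : ℝ) * (t + 1) * qseq t
    set r : ℝ := (t + 2) / 2 ^ (t + 1)
    have hC : 0 ≤ C := mul_nonneg (by positivity) (qseq_nonneg t)
    have hlt := add_two_lt_two_pow_succ ht
    have hr1 : r < 1 := (div_lt_one (by positivity)).2 hlt
    calc weightSum (t + 1) n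
        ≤ ∑ m ∈ Icc 1 (n / (t + 1)), ((t : ℝ) + 2) ^ m * weightSum t (n - (t + 1) * m) :=
          weightSum_succ_le t n
      _ ≤ ∑ m ∈ Icc 1 (n / (t + 1)), ((t : ℝ) + 2) ^ m * (C * 2 ^ (n - (t + 1) * m)) :=
          sum_le_sum fun m _ => mul_le_mul_of_nonneg_left (ih _) (by positivity)
      _ = C * 2 ^ n * ∑ m ∈ Ico 1 (n / (t + 1) + 1), r ^ m := by
          rw [mul_sum, Ico_add_one_right_eq_Icc]
          refine sum_congr rfl fun m hm => ?_
          have hmn : (t + 1) * m ≤ n :=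
            (Nat.mul_le_mul_left _ (mem_Icc.1 hm).2).trans (Nat.mul_div_le n (t + 1))
          rw [mul_left_comm, pow_mul_pow_sub_eq two_ne_zero hmn, ← mul_assoc]
      _ ≤ C * 2 ^ n * (r ^ 1 / (1 - r)) :=
          mul_le_mul_of_nonneg_left (geom_sum_Ico_le_of_lt_one (by positivity) hr1) (by positivity)
      _ = ((t + 1 : ℕ) : ℝ) * ((t + 1 : ℕ) + 1) * qseq (t + 1) * 2 ^ n := by
          have hden : (2 : ℝ) ^ (t + 1) - (t + 2) ≠ 0 := by linarith
          push_cast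
          rw [show (t : ℝ) + 1 + 1 = t + 2 by ring, mul_qseq_succ ht, pow_one]
          simp only [r, C]
          field_simp

theorem stmt_2_general (t n : ℕ) (ht : 1 ≤ t) :
    primeWeight t n ≤ qseq t * 2 ^ n := by
  calc primeWeight t n = 1 / ((t : ℝ) * (t + 1)) * weightSum t n :=
        primeWeight_eq_mul_weightSum t n
    _ ≤ 1 / ((t : ℝ) * (t + 1)) * (t * (t + 1) * qseq t * 2 ^ n) := by
        gcongr; exact weightSum_le ht n
    _ = qseq t * 2 ^ n := by field_simp

theorem stmt_2 (t n : ℕ) (ht : 1 ≤ t) (hn : 1 ≤ n) :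
    primeWeight t n ≤ qseq t * 2 ^ n :=
  stmt_2_general t n ht
end

section
/- For all integers n ≥ 1, the number of two-ball prime juggling patterns P(n,2) := Σ_{t≥1} c_t(n) satisfies P(n,2) ≤ γ·2^n, where γ = Σ_{t≥1} q_t with q_1 = 1/2 and q_t = ((t-1)/(2^t-t-1))·q_{t-1} for t ≥ 2. -/
open scoped Classical

/-
A tuple of `t + 1` distinct positive parts is determined by its smallest part `k` and the
`t` parts obtained by subtracting `k` from the others; as the factors `(i + 2)/(i + 1)`
telescope, this peeling multiplies the weight by `(t + 2)^k` and removes `(t + 1) k` from `n`.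
Hence `W t n := t (t + 1) c_t(n)` (`weightSum`) satisfies
`W (t + 1) n ≤ ∑_{k ≥ 1} (t + 2)^k W t (n - (t + 1) k)`, and the bound
`W t n ≤ t (t + 1) q_t 2^n` follows by induction on `t` from a geometric series with ratio
`(t + 2) / 2^(t + 1)`; the recursion of `q_t` is exactly what this series produces.
-/

open Finset

theorem Finset.sum_comp_le_sum_of_injOn {ι κ M : Type*} [AddCommMonoid M] [Preorder M]
    [AddLeftMono M] {s : Finset ι} {t : Finset κ} {e : ι → κ} (he : Set.InjOn e s)
    (hst : Set.MapsTo e s t) {f : κ → M} (hf : ∀ y ∈ t, 0 ≤ f y) :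
    ∑ x ∈ s, f (e x) ≤ ∑ y ∈ t, f y := by
  classical
  rw [← sum_image he]
  exact sum_le_sum_of_subset_of_nonneg (image_subset_iff.2 hst) fun y hy _ => hf y hy

namespace PrimeJuggling

lemma add_two_lt_two_pow {t : ℕ} (ht : 1 ≤ t) : (t : ℝ) + 2 < 2 ^ (t + 1) := by
  have h : t < 2 ^ t := Nat.lt_two_pow_self
  exact_mod_cast (by rw [pow_succ]; omega : t + 2 < 2 ^ (t + 1))

lemma qseq_succ {t : ℕ} (ht : 1 ≤ t) :
    qseq (t + 1) = t / (2 ^ (t + 1) - (t + 2)) * qseq t := by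
  obtain ⟨m, rfl⟩ := Nat.exists_eq_add_of_le' ht
  simp only [qseq]
  push_cast
  ring_nf

lemma qseq_nonneg : ∀ t, 0 ≤ qseq t
  | 0 => le_rfl
  | 1 => by norm_num [qseq]
  | t + 2 => by
    rw [qseq_succ (by omega)]
    have := add_two_lt_two_pow (t := t + 1) (by omega)
    exact mul_nonneg (div_nonneg (by positivity) (by linarith)) (qseq_nonneg (t + 1))

lemma qseq_succ_le_half {t : ℕ} (ht : 2 ≤ t) : qseq (t + 1) ≤ 1 / 2 * qseq t := by
  have hbig : 3 * t + 2 ≤ 2 ^ (t + 1) :=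
    Nat.le_induction (by norm_num) (fun s _ ih => by rw [pow_succ]; omega) t ht
  have hbig' : (3 * t + 2 : ℝ) ≤ 2 ^ (t + 1) := by exact_mod_cast hbig
  have ht' : (2 : ℝ) ≤ t := by exact_mod_cast ht
  rw [qseq_succ (by omega)]
  refine mul_le_mul_of_nonneg_right ?_ (qseq_nonneg t)
  rw [div_le_iff₀ (by linarith)]
  linarith

lemma summable_qseq : Summable qseq :=
  summable_of_ratio_norm_eventually_le (r := 1 / 2) (by norm_num) <|
    Filter.eventually_atTop.2 ⟨2, fun t ht => by
      simpa only [Real.norm_of_nonneg (qseq_nonneg _)] using qseq_succ_le_half ht⟩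

def distinctParts (t n : ℕ) : Finset (Fin t → ℕ) :=
  (Fintype.piFinset (fun _ : Fin t => Finset.range (n + 1))).filter
    (fun p => (∀ i j : Fin t, i < j → p j < p i) ∧ (∀ i, 1 ≤ p i) ∧ ∑ i, p i = n)

noncomputable def ratio (i : ℕ) : ℝ := ((i : ℝ) + 2) / ((i : ℝ) + 1)

noncomputable def weight {t : ℕ} (p : Fin t → ℕ) : ℝ := ∏ i : Fin t, ratio i ^ p i

noncomputable def weightSum (t n : ℕ) : ℝ := ∑ p ∈ distinctParts t n, weight p

lemma primeWeight_eq_weightSum (t n : ℕ) :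
    primeWeight t n = 1 / ((t : ℝ) * ((t : ℝ) + 1)) * weightSum t n := by
  rw [weightSum, mul_sum]
  rfl

lemma mem_distinctParts {t n : ℕ} {p : Fin t → ℕ} :
    p ∈ distinctParts t n ↔ StrictAnti p ∧ (∀ i, 1 ≤ p i) ∧ ∑ i, p i = n := by
  simp only [distinctParts, mem_filter, Fintype.mem_piFinset, mem_range, Nat.lt_succ_iff]
  refine ⟨fun h => h.2, fun h => ⟨fun i => ?_, h⟩⟩
  rw [← h.2.2]
  exact single_le_sum (fun j _ => Nat.zero_le (p j)) (mem_univ i)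

lemma weight_nonneg {t : ℕ} (p : Fin t → ℕ) : 0 ≤ weight p :=
  prod_nonneg fun _ _ => by unfold ratio; positivity

lemma weightSum_nonneg (t n : ℕ) : 0 ≤ weightSum t n :=
  sum_nonneg fun p _ => weight_nonneg p

lemma prod_ratio (t : ℕ) : ∏ i : Fin t, ratio i = t + 1 := by
  induction t with
  | zero => simp
  | succ t ih =>
    rw [Fin.prod_univ_castSucc]
    simp only [Fin.val_castSucc, Fin.val_last]
    rw [ih, ratio]
    push_cast
    field_simp
    ring

lemma weight_eq_of_le_castSucc {t : ℕ} (p : Fin (t + 1) → ℕ)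
    (hp : ∀ i : Fin t, p (Fin.last t) ≤ p i.castSucc) :
    weight p = ((t : ℝ) + 2) ^ p (Fin.last t) *
      weight (fun i : Fin t => p i.castSucc - p (Fin.last t)) := by
  set k := p (Fin.last t)
  have hsplit : ∀ i : Fin t,
      ratio i ^ p i.castSucc = ratio i ^ (p i.castSucc - k) * ratio i ^ k := fun i => by
    rw [← pow_add, Nat.sub_add_cancel (hp i)]
  rw [weight, weight, Fin.prod_univ_castSucc]
  simp only [Fin.val_castSucc, Fin.val_last, hsplit, prod_mul_distrib, prod_pow, prod_ratio]
  rw [mul_assoc, ← mul_pow, ratio]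
  field_simp

def peel {t : ℕ} (p : Fin (t + 1) → ℕ) : (_ : ℕ) × (Fin t → ℕ) :=
  ⟨p (Fin.last t), fun i => p i.castSucc - p (Fin.last t)⟩

lemma last_lt_castSucc {t n : ℕ} {p : Fin (t + 1) → ℕ} (hp : p ∈ distinctParts (t + 1) n)
    (i : Fin t) : p (Fin.last t) < p i.castSucc :=
  (mem_distinctParts.1 hp).1 (Fin.castSucc_lt_last i)

lemma sum_peel_add {t n : ℕ} {p : Fin (t + 1) → ℕ} (hp : p ∈ distinctParts (t + 1) n) :
    ∑ i, (peel p).2 i + (t + 1) * (peel p).1 = n := by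
  have hsub : ∑ i : Fin t, ((p i.castSucc - p (Fin.last t)) + p (Fin.last t)) =
      ∑ i : Fin t, p i.castSucc :=
    sum_congr rfl fun i _ => Nat.sub_add_cancel (last_lt_castSucc hp i).le
  rw [sum_add_distrib, sum_const, card_univ, Fintype.card_fin, smul_eq_mul] at hsub
  have hsum := (mem_distinctParts.1 hp).2.2
  rw [Fin.sum_univ_castSucc] at hsum
  simp only [peel]
  linarith

lemma peel_mem {t n : ℕ} {p : Fin (t + 1) → ℕ} (hp : p ∈ distinctParts (t + 1) n) :
    peel p ∈ ({k ∈ Ico 1 (n + 1) | (t + 1) * k ≤ n}).sigma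
      fun k => distinctParts t (n - (t + 1) * k) := by
  have hlt := last_lt_castSucc hp
  have hsum := sum_peel_add hp
  have hk := (mem_distinctParts.1 hp).2.1 (Fin.last t)
  have hanti := (mem_distinctParts.1 hp).1
  rw [mem_sigma, mem_filter, mem_Ico, mem_distinctParts]
  dsimp only [peel] at hsum ⊢
  have hk_le : p (Fin.last t) ≤ (t + 1) * p (Fin.last t) := Nat.le_mul_of_pos_left _ (by omega)
  refine ⟨⟨⟨hk, by omega⟩, by omega⟩, fun i j hij => ?_, fun i => ?_, by omega⟩
  · have := hanti (Fin.castSucc_lt_castSucc_iff.2 hij)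
    have := hlt j
    dsimp only
    omega
  · have := hlt i
    omega

lemma peel_injOn (t n : ℕ) :
    Set.InjOn peel (distinctParts (t + 1) n : Set (Fin (t + 1) → ℕ)) := by
  intro p hp q hq hpq
  have hlast : p (Fin.last t) = q (Fin.last t) := congrArg Sigma.fst hpq
  have hrest := congrArg Sigma.snd hpq
  funext x
  refine Fin.lastCases hlast (fun i => ?_) x
  have := congrFun hrest i
  have := last_lt_castSucc hp i
  have := last_lt_castSucc hq i
  simp only [peel] at *
  omega

lemma weightSum_succ_le (t n : ℕ) :
    weightSum (t + 1) n ≤ ∑ k ∈ Ico 1 (n + 1) with (t + 1) * k ≤ n,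
      ((t : ℝ) + 2) ^ k * weightSum t (n - (t + 1) * k) := by
  have hweight : ∀ p ∈ distinctParts (t + 1) n,
      weight p = ((t : ℝ) + 2) ^ (peel p).1 * weight (peel p).2 := fun p hp =>
    weight_eq_of_le_castSucc p fun i => (last_lt_castSucc hp i).le
  simp only [weightSum, mul_sum]
  rw [sum_sigma', sum_congr rfl hweight]
  exact sum_comp_le_sum_of_injOn (f := fun x => ((t : ℝ) + 2) ^ x.1 * weight x.2)
    (peel_injOn t n) (fun p hp => peel_mem hp) fun x _ =>
      mul_nonneg (by positivity) (weight_nonneg x.2)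

lemma weightSum_one_le (n : ℕ) : weightSum 1 n ≤ 2 ^ n := by
  have hsub : distinctParts 1 n ⊆ {fun _ => n} := fun p hp => by
    have hsum := (mem_distinctParts.1 hp).2.2
    rw [Fin.sum_univ_one] at hsum
    exact mem_singleton.2 (funext fun i => by rw [Subsingleton.elim i 0, hsum])
  calc weightSum 1 n ≤ ∑ p ∈ {fun _ => n}, weight p :=
        sum_le_sum_of_subset_of_nonneg hsub fun p _ _ => weight_nonneg p
    _ = 2 ^ n := by norm_num [weight, ratio]

lemma sum_filter_pow_le {r : ℝ} (hr0 : 0 ≤ r) (hr1 : r < 1) (N : ℕ) (P : ℕ → Prop)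
    [DecidablePred P] : ∑ k ∈ Ico 1 N with P k, r ^ k ≤ r / (1 - r) :=
  (sum_le_sum_of_subset_of_nonneg (filter_subset _ _) fun k _ _ => by positivity).trans
    (by simpa using geom_sum_Ico_le_of_lt_one (m := 1) (n := N) hr0 hr1)

lemma qseq_mul_geom {t : ℕ} (ht : 1 ≤ t) :
    qseq t * (((t : ℝ) + 2) / 2 ^ (t + 1) / (1 - ((t : ℝ) + 2) / 2 ^ (t + 1))) =
      ((t : ℝ) + 2) / t * qseq (t + 1) := by
  have hden : (2 : ℝ) ^ (t + 1) - (t + 2) ≠ 0 := (sub_pos.2 (add_two_lt_two_pow ht)).ne'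
  have ht0 : (t : ℝ) ≠ 0 := by positivity
  rw [qseq_succ ht, one_sub_div (by positivity)]
  field_simp

lemma weightSum_le {t : ℕ} (ht : 1 ≤ t) (n : ℕ) :
    weightSum t n ≤ t * (t + 1) * qseq t * 2 ^ n := by
  induction t, ht using Nat.le_induction generalizing n with
  | base => norm_num [qseq]; exact weightSum_one_le n
  | succ t ht ih =>
    set r : ℝ := (t + 2) / 2 ^ (t + 1) with hr
    set C : ℝ := t * (t + 1) * qseq t
    have hC : 0 ≤ C := mul_nonneg (by positivity) (qseq_nonneg t)
    have hr1 : r < 1 := (div_lt_one (by positivity)).2 (add_two_lt_two_pow ht)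
    have hterm : ∀ k ∈ {k ∈ Ico 1 (n + 1) | (t + 1) * k ≤ n},
        ((t : ℝ) + 2) ^ k * weightSum t (n - (t + 1) * k) ≤ C * 2 ^ n * r ^ k := by
      intro k hk
      have h2 : (2 : ℝ) ^ n = 2 ^ (n - (t + 1) * k) * (2 ^ (t + 1)) ^ k := by
        rw [← pow_mul, ← pow_add, Nat.sub_add_cancel (mem_filter.1 hk).2]
      calc ((t : ℝ) + 2) ^ k * weightSum t (n - (t + 1) * k)
          ≤ ((t : ℝ) + 2) ^ k * (C * 2 ^ (n - (t + 1) * k)) :=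
            mul_le_mul_of_nonneg_left (ih _) (by positivity)
        _ = C * 2 ^ n * r ^ k := by rw [h2, hr, div_pow]; field_simp
    have ht0 : (t : ℝ) ≠ 0 := by positivity
    calc weightSum (t + 1) n
        ≤ ∑ k ∈ Ico 1 (n + 1) with (t + 1) * k ≤ n,
            ((t : ℝ) + 2) ^ k * weightSum t (n - (t + 1) * k) := weightSum_succ_le t n
      _ ≤ ∑ k ∈ Ico 1 (n + 1) with (t + 1) * k ≤ n, C * 2 ^ n * r ^ k := sum_le_sum hterm
      _ = C * 2 ^ n * ∑ k ∈ Ico 1 (n + 1) with (t + 1) * k ≤ n, r ^ k := (mul_sum ..).symm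
      _ ≤ C * 2 ^ n * (r / (1 - r)) :=
          mul_le_mul_of_nonneg_left (sum_filter_pow_le (by positivity) hr1 _ _) (by positivity)
      _ = _ := by
          rw [mul_right_comm, mul_assoc _ (qseq t), qseq_mul_geom ht]
          push_cast
          field_simp
          ring

lemma primeWeight_nonneg (t n : ℕ) : 0 ≤ primeWeight t n := by
  rw [primeWeight_eq_weightSum]
  exact mul_nonneg (by positivity) (weightSum_nonneg t n)

lemma primeWeight_le (t n : ℕ) : primeWeight t n ≤ qseq t * 2 ^ n := by
  rcases Nat.eq_zero_or_pos t with rfl | ht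
  · simp [primeWeight_eq_weightSum, qseq]
  · have hpos : (0 : ℝ) < t * (t + 1) := by positivity
    rw [primeWeight_eq_weightSum, one_div_mul_eq_div, div_le_iff₀ hpos]
    linarith [weightSum_le ht n]

end PrimeJuggling

theorem stmt_5_general (n : ℕ) :
    (∑' t : ℕ, primeWeight t n) ≤ (∑' t : ℕ, qseq t) * 2 ^ n := by
  have hdom : Summable fun t => qseq t * 2 ^ n := PrimeJuggling.summable_qseq.mul_right _
  have hsum : Summable fun t => primeWeight t n :=
    hdom.of_nonneg_of_le (PrimeJuggling.primeWeight_nonneg · n) (PrimeJuggling.primeWeight_le · n)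
  rw [← tsum_mul_right]
  exact hsum.tsum_le_tsum (PrimeJuggling.primeWeight_le · n) hdom

theorem stmt_5 (n : ℕ) (hn : 1 ≤ n) :
    (∑' t : ℕ, primeWeight t n) ≤ (∑' t : ℕ, qseq t) * 2 ^ n :=
  stmt_5_general n
end

section
/- For all integers n ≥ 1, c_2(n) = (1/2)·2^n − (2/3)·2^n·(3/4)^(⌊(n-1)/2⌋ + 1), and consequently c_2(n) ≥ (1/2)·2^n − (4√3/9)·(√3)^n. -/
/-!
A partition `n = (n - k) + k` into two distinct positive parts is determined by its smaller
part `k`, which ranges over `1 ≤ k ≤ (n - 1) / 2`, and has weight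
`2 ^ (n - k) (3 / 2) ^ k / 6 = 2 ^ n (3 / 4) ^ k / 6`; so `c₂(n)` is a geometric sum.
For the bound, `2 ((n - 1) / 2 + 1) ≥ n` gives `2 ^ n (3 / 4) ^ ((n - 1) / 2 + 1) ≤ (√3) ^ n`,
and `2 / 3 ≤ 4 √3 / 9`.
-/

open scoped Classical

lemma mem_twoDistinctParts_iff {n : ℕ} {p : Fin 2 → ℕ} :
    p ∈ (Fintype.piFinset (fun _ : Fin 2 => Finset.range (n + 1))).filter
      (fun p => (∀ i j : Fin 2, i < j → p j < p i) ∧ (∀ i, 1 ≤ p i) ∧ ∑ i, p i = n) ↔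
      p 1 ∈ Finset.Ico 1 ((n - 1) / 2 + 1) ∧ p 0 = n - p 1 := by
  simp only [Finset.mem_filter, Fintype.mem_piFinset, Finset.mem_range, Fin.forall_fin_two,
    Fin.sum_univ_two, Finset.mem_Ico, Fin.isValue, Order.lt_add_one_iff, lt_self_iff_false,
    imp_self, zero_lt_one, forall_const, true_and, not_lt_zero, IsEmpty.forall_iff, and_true]
  omega

lemma primeWeight_two_eq_sum (n : ℕ) :
    primeWeight 2 n = ∑ k ∈ Finset.Ico 1 ((n - 1) / 2 + 1), 2 ^ (n - k) * (3 / 2 : ℝ) ^ k / 6 := by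
  refine Finset.sum_nbij' (fun p => p 1) (fun k => ![n - k, k]) ?_ ?_ ?_ ?_ ?_
  · intro p hp
    exact (mem_twoDistinctParts_iff.1 hp).1
  · intro k hk
    exact mem_twoDistinctParts_iff.2 ⟨hk, rfl⟩
  · intro p hp
    ext i
    fin_cases i
    · exact (mem_twoDistinctParts_iff.1 hp).2.symm
    · rfl
  · intro k _
    rfl
  · intro p hp
    rw [Fin.prod_univ_two, (mem_twoDistinctParts_iff.1 hp).2]
    norm_num
    ring

lemma primeWeight_two (n : ℕ) :
    primeWeight 2 n =
      (1 / 2) * 2 ^ n - (2 / 3) * 2 ^ n * (3 / 4 : ℝ) ^ ((n - 1) / 2 + 1) := by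
  have hsummand : ∀ k ∈ Finset.Ico 1 ((n - 1) / 2 + 1),
      2 ^ (n - k) * (3 / 2 : ℝ) ^ k / 6 = 2 ^ n / 6 * (3 / 4) ^ k := by
    intro k hk
    have hkn : k ≤ n := by grind
    rw [show (3 / 2 : ℝ) = 2 * (3 / 4) by norm_num, mul_pow, ← mul_assoc, ← pow_add,
      Nat.sub_add_cancel hkn]
    ring
  rw [primeWeight_two_eq_sum, Finset.sum_congr rfl hsummand, ← Finset.mul_sum,
    geom_sum_Ico (by norm_num) (by omega)]
  ring

lemma two_pow_mul_three_div_four_pow_le {n k : ℕ} (h : n ≤ 2 * k) :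
    2 ^ n * (3 / 4 : ℝ) ^ k ≤ √3 ^ n := by
  have hbase : (3 / 4 : ℝ) = (√3 / 2) ^ 2 := by
    rw [div_pow, Real.sq_sqrt (by norm_num)]; norm_num
  calc 2 ^ n * (3 / 4 : ℝ) ^ k = 2 ^ n * (√3 / 2) ^ (2 * k) := by rw [hbase, pow_mul]
    _ ≤ 2 ^ n * (√3 / 2) ^ n := by
        have hle_one : √3 / 2 ≤ 1 := by
          rw [div_le_one₀ two_pos, Real.sqrt_le_left two_pos.le]; norm_num
        exact mul_le_mul_of_nonneg_left (pow_le_pow_of_le_one (by positivity) hle_one h)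
          (by positivity)
    _ = √3 ^ n := by rw [← mul_pow]; ring_nf

theorem stmt_6_general (n : ℕ) :
    primeWeight 2 n =
        (1 / 2) * 2 ^ n - (2 / 3) * 2 ^ n * (3 / 4 : ℝ) ^ ((n - 1) / 2 + 1) ∧
      primeWeight 2 n ≥ (1 / 2) * 2 ^ n - (4 * Real.sqrt 3 / 9) * Real.sqrt 3 ^ n := by
  refine ⟨primeWeight_two n, ?_⟩
  have hpow := two_pow_mul_three_div_four_pow_le (show n ≤ 2 * ((n - 1) / 2 + 1) by omega)
  have hconst : (2 / 3 : ℝ) ≤ 4 * √3 / 9 := by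
    nlinarith [Real.sq_sqrt (show (0 : ℝ) ≤ 3 by norm_num), Real.sqrt_nonneg 3]
  rw [primeWeight_two, ge_iff_le, sub_le_sub_iff_left, mul_assoc]
  exact mul_le_mul hconst hpow (by positivity) (by positivity)

theorem stmt_6 (n : ℕ) (hn : 1 ≤ n) :
    primeWeight 2 n =
        (1 / 2) * 2 ^ n - (2 / 3) * 2 ^ n * (3 / 4 : ℝ) ^ ((n - 1) / 2 + 1) ∧
      primeWeight 2 n ≥ (1 / 2) * 2 ^ n - (4 * Real.sqrt 3 / 9) * Real.sqrt 3 ^ n :=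
  stmt_6_general n
end

section
/- The constant γ = 1/2 + (1/2)·Σ_{t≥2} Π_{i=2}^t ((i-1)/(2^i - i - 1)) satisfies 1.3296 < γ < 1.3297. -/
/-!
Writing `a t` for the `t`-th summand, `a (t + 1) = a t · (t + 2)/(2^(t + 3) - t - 4)` and this
ratio is at most `1/2`. Summing the first six terms exactly and bounding the remaining tail by
the geometric series `a 6 · (1 + 1/2 + 1/4 + ⋯) = 2 a 6` pins the sum between `1.6592` and
`1.6594`, hence `γ` between `1.3296` and `1.3297`.
-/

open Finset

theorem summable_and_tsum_le_of_succ_le_mul {f : ℕ → ℝ} {r : ℝ} (hf : ∀ n, 0 ≤ f n)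
    (hr₀ : 0 ≤ r) (hr₁ : r < 1) (h : ∀ n, f (n + 1) ≤ r * f n) :
    Summable f ∧ ∑' n, f n ≤ f 0 / (1 - r) := by
  have hgeom : ∀ n, f n ≤ f 0 * r ^ n := fun n ↦ by
    rw [mul_comm]
    exact le_geom hr₀ n fun k _ ↦ h k
  have hsum : Summable fun n ↦ f 0 * r ^ n :=
    (summable_geometric_of_lt_one hr₀ hr₁).mul_left _
  have hf_sum : Summable f := .of_nonneg_of_le hf hgeom hsum
  refine ⟨hf_sum, ?_⟩
  calc ∑' n, f n ≤ ∑' n, f 0 * r ^ n := hf_sum.tsum_le_tsum hgeom hsum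
    _ = f 0 / (1 - r) := by
      rw [tsum_mul_left, tsum_geometric_of_lt_one hr₀ hr₁, div_eq_mul_inv]

lemma add_two_le_two_pow {i : ℕ} (hi : 2 ≤ i) : i + 2 ≤ 2 ^ i := by
  induction i, hi using Nat.le_induction with
  | base => norm_num
  | succ n _ ih => rw [pow_succ]; omega

lemma three_mul_le_two_pow_add_one {i : ℕ} (hi : 3 ≤ i) : 3 * i ≤ 2 ^ i + 1 := by
  induction i, hi using Nat.le_induction with
  | base => norm_num
  | succ n _ ih => rw [pow_succ]; omega

noncomputable def gammaFactor (i : ℕ) : ℝ := ((i : ℝ) - 1) / (2 ^ i - (i : ℝ) - 1)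

/-- The summand of index `t + 2` in the paper's series. -/
noncomputable def gammaTerm (t : ℕ) : ℝ := ∏ i ∈ Icc 2 (t + 2), gammaFactor i

lemma gammaFactor_nonneg {i : ℕ} (hi : 2 ≤ i) : 0 ≤ gammaFactor i := by
  have hden : (i : ℝ) + 2 ≤ 2 ^ i := by exact_mod_cast add_two_le_two_pow hi
  have hi' : (2 : ℝ) ≤ i := by exact_mod_cast hi
  exact div_nonneg (by linarith) (by linarith)

lemma gammaFactor_le_half {i : ℕ} (hi : 3 ≤ i) : gammaFactor i ≤ 1 / 2 := by
  have hden : (i : ℝ) + 2 ≤ 2 ^ i := by exact_mod_cast add_two_le_two_pow (by omega : 2 ≤ i)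
  have h3 : 3 * (i : ℝ) ≤ 2 ^ i + 1 := by exact_mod_cast three_mul_le_two_pow_add_one hi
  rw [gammaFactor, div_le_div_iff₀ (by linarith) (by norm_num)]
  linarith

lemma gammaTerm_nonneg (t : ℕ) : 0 ≤ gammaTerm t :=
  prod_nonneg fun _ hi ↦ gammaFactor_nonneg (mem_Icc.mp hi).1

lemma gammaTerm_succ_le_half (t : ℕ) : gammaTerm (t + 1) ≤ 1 / 2 * gammaTerm t := by
  rw [gammaTerm, prod_Icc_succ_top (by omega), mul_comm]
  exact mul_le_mul_of_nonneg_right (gammaFactor_le_half (by omega)) (gammaTerm_nonneg t)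

lemma summable_gammaTerm : Summable gammaTerm :=
  (summable_and_tsum_le_of_succ_le_mul gammaTerm_nonneg (by norm_num) (by norm_num)
    gammaTerm_succ_le_half).1

lemma sum_range_six_gammaTerm : ∑ t ∈ range 6, gammaTerm t = 18033 / 10868 := by
  simp only [sum_range_succ, range_zero, sum_empty, gammaTerm, gammaFactor]
  norm_num [prod_Icc_succ_top]

lemma gammaTerm_six : gammaTerm 6 = 7 / 2684396 := by
  rw [gammaTerm, show Icc 2 (6 + 2) = {2, 3, 4, 5, 6, 7, 8} by rfl]
  norm_num [gammaFactor]

lemma tsum_gammaTerm_mem_Ioo : ∑' t, gammaTerm t ∈ Set.Ioo 1.6592 1.6594 := by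
  have htail := (summable_and_tsum_le_of_succ_le_mul (fun t ↦ gammaTerm_nonneg (t + 6))
    (by norm_num) (by norm_num) fun t ↦ gammaTerm_succ_le_half (t + 6)).2
  have htail_nonneg : 0 ≤ ∑' t, gammaTerm (t + 6) := tsum_nonneg fun t ↦ gammaTerm_nonneg _
  rw [← summable_gammaTerm.sum_add_tsum_nat_add 6, sum_range_six_gammaTerm]
  rw [zero_add, gammaTerm_six] at htail
  constructor <;> norm_num at htail ⊢ <;> linarith

theorem stmt_14 :
    1.3296 < (1 / 2 : ℝ) + (1 / 2) *
        ∑' t : ℕ, ∏ i ∈ Finset.Icc 2 (t + 2), ((i : ℝ) - 1) / (2 ^ i - (i : ℝ) - 1) ∧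
      (1 / 2 : ℝ) + (1 / 2) *
        ∑' t : ℕ, ∏ i ∈ Finset.Icc 2 (t + 2), ((i : ℝ) - 1) / (2 ^ i - (i : ℝ) - 1)
        < 1.3297 := by
  obtain ⟨hlow, hhigh⟩ := tsum_gammaTerm_mem_Ioo
  unfold gammaTerm gammaFactor at hlow hhigh
  constructor <;> norm_num at hlow hhigh ⊢ <;> linarith
end
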